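/- Let G and H be simple graphs and u ∈ V(G), v ∈ V(H) with deg_G(u) ≥ 2 and deg_H(v) ≥ 2. Then the local clustering coefficient of (u,v) in G × H satisfies Cc_{(u,v)}(G × H) = f(u,v) · Cc_u(G) · Cc_v(H), where f(u,v) = (deg_G(u) − 1)(deg_H(v) − 1)/(deg_G(u) · deg_H(v) − 1). -/

import Mathlib

variable {α β : Type*}

/-- Tensor (categorical) product of simple graphs. -/
def tensorProdG (G : SimpleGraph α) (H : SimpleGraph β) : SimpleGraph (α × β) where
  Adj x y := G.Adj x.1 y.1 ∧ H.Adj x.2 y.2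
  symm := ⟨fun _ _ h => ⟨h.1.symm, h.2.symm⟩⟩
  loopless := ⟨fun x h => G.loopless.irrefl x.1 h.1⟩

instance (G : SimpleGraph α) (H : SimpleGraph β) [DecidableRel G.Adj] [DecidableRel H.Adj] :
    DecidableRel (tensorProdG G H).Adj := fun x y => (instDecidableAnd : Decidable (G.Adj x.1 y.1 ∧ H.Adj x.2 y.2))

/-- Number of triangles incident to `u`: edges of the induced neighborhood. -/
noncomputable def triCount (G : SimpleGraph α) [Fintype α] (u : α) : ℕ :=
  Nat.card (SimpleGraph.induce (G.neighborSet u) G).edgeSet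

/-- Local clustering coefficient. -/
noncomputable def locCc (G : SimpleGraph α) [Fintype α] [DecidableRel G.Adj] (u : α) : ℝ :=
  if 2 ≤ G.degree u then (triCount G u : ℝ) / ((G.degree u).choose 2) else 0

/-- Global clustering coefficient. -/
noncomputable def globCc (G : SimpleGraph α) [Fintype α] [DecidableRel G.Adj] : ℝ :=
  (∑ v, locCc G v) / (Fintype.card α)

/-- Minimum degree of the induced neighborhood of `u`. -/
noncomputable def nbrMinDeg (G : SimpleGraph α) [Fintype α] [DecidableRel G.Adj] (u : α) : ℕ :=
  (SimpleGraph.induce (G.neighborSet u) G).minDegree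

/-- Average degree, as a real number. -/
noncomputable def avgDeg (G : SimpleGraph α) [Fintype α] [DecidableRel G.Adj] : ℝ :=
  (∑ v, (G.degree v : ℝ)) / (Fintype.card α)

/-!
The neighbourhood of `(u, v)` in `G × H` is the product of the neighbourhoods of `u` and `v`,
and the subgraph it induces is the tensor product of the two induced neighbourhoods. Since a
dart of a tensor product is a pair of darts, a tensor product of graphs with `m` and `n` edges
has `2mn` edges. Hence `deg (u, v) = deg u · deg v` and `t (u, v) = 2 t(u) t(v)`, and the factor
`f(u, v)` is what remains when `C(deg u · deg v, 2)` is compared with `C(deg u, 2) · C(deg v, 2)`.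
-/

theorem SimpleGraph.natCard_dart_eq_twice_natCard_edgeSet {V : Type*} [Finite V]
    (G : SimpleGraph V) : Nat.card G.Dart = 2 * Nat.card G.edgeSet := by
  classical
  have := Fintype.ofFinite V
  rw [Nat.card_eq_fintype_card, Nat.card_eq_fintype_card, G.dart_card_eq_twice_card_edges,
    G.edgeFinset_card]

namespace tensorProdG

def dartEquiv (G : SimpleGraph α) (H : SimpleGraph β) :
    (tensorProdG G H).Dart ≃ G.Dart × H.Dart where
  toFun d := (⟨(d.fst.1, d.snd.1), d.adj.1⟩, ⟨(d.fst.2, d.snd.2), d.adj.2⟩)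
  invFun p := ⟨((p.1.fst, p.2.fst), (p.1.snd, p.2.snd)), ⟨p.1.adj, p.2.adj⟩⟩
  left_inv _ := rfl
  right_inv _ := rfl

theorem natCard_edgeSet [Finite α] [Finite β] (G : SimpleGraph α) (H : SimpleGraph β) :
    Nat.card (tensorProdG G H).edgeSet = 2 * (Nat.card G.edgeSet * Nat.card H.edgeSet) := by
  have h := Nat.card_congr (dartEquiv G H)
  simp only [Nat.card_prod, SimpleGraph.natCard_dart_eq_twice_natCard_edgeSet] at h
  linarith

def induceNeighborSetIso (G : SimpleGraph α) (H : SimpleGraph β) (u : α) (v : β) :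
    (tensorProdG G H).induce ((tensorProdG G H).neighborSet (u, v)) ≃g
      tensorProdG (G.induce (G.neighborSet u)) (H.induce (H.neighborSet v)) where
  toEquiv := Equiv.Set.prod (G.neighborSet u) (H.neighborSet v)
  map_rel_iff' := Iff.rfl

end tensorProdG

theorem degree_tensorProdG [Fintype α] [Fintype β] (G : SimpleGraph α) (H : SimpleGraph β)
    [DecidableRel G.Adj] [DecidableRel H.Adj] (u : α) (v : β) :
    (tensorProdG G H).degree (u, v) = G.degree u * H.degree v := by
  simp only [← SimpleGraph.card_neighborSet_eq_degree, ← Nat.card_eq_fintype_card]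
  exact (Nat.card_congr (Equiv.Set.prod _ _)).trans (Nat.card_prod _ _)

theorem triCount_tensorProdG [Fintype α] [Fintype β] (G : SimpleGraph α) (H : SimpleGraph β)
    (u : α) (v : β) :
    triCount (tensorProdG G H) (u, v) = 2 * (triCount G u * triCount H v) := by
  rw [triCount, Nat.card_congr (tensorProdG.induceNeighborSetIso G H u v).mapEdgeSet,
    tensorProdG.natCard_edgeSet, triCount, triCount]

variable [Fintype α] [Fintype β] (G : SimpleGraph α) (H : SimpleGraph β)
  [DecidableRel G.Adj] [DecidableRel H.Adj]

theorem tensor_locCc (u : α) (v : β) (hu : 2 ≤ G.degree u) (hv : 2 ≤ H.degree v) :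
    locCc (tensorProdG G H) (u, v) =
      (((G.degree u : ℝ) - 1) * ((H.degree v : ℝ) - 1) / ((G.degree u : ℝ) * (H.degree v : ℝ) - 1)) * locCc G u * locCc H v := by
  have huv : 2 ≤ (tensorProdG G H).degree (u, v) := by
    rw [degree_tensorProdG]; nlinarith
  rw [locCc, locCc, locCc, if_pos hu, if_pos hv, if_pos huv, degree_tensorProdG,
    triCount_tensorProdG, Nat.cast_choose_two, Nat.cast_choose_two, Nat.cast_choose_two]
  have ha : (2 : ℝ) ≤ G.degree u := by exact_mod_cast hu
  have hb : (2 : ℝ) ≤ H.degree v := by exact_mod_cast hv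
  have hab : (G.degree u : ℝ) * H.degree v - 1 ≠ 0 := by nlinarith
  have ha1 : (G.degree u : ℝ) - 1 ≠ 0 := by linarith
  have hb1 : (H.degree v : ℝ) - 1 ≠ 0 := by linarith
  push_cast
  field_simp
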